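/- arXiv:1705.04207 — 2 statements merged into one kernel-verified Lean document; each statement's English description precedes it below -/
import Mathlib

section
/- Let P = (a,b,c) with b ≠ 0 and c ≠ 0. Setting φ = arccot(-(a/b)·(e^{c}-1)/(e^{-c}-1)), θ = arccot(b/(sin φ·(e^{c}-1))), and t = c/sin θ, the translation curve (x(s),y(s),z(s)) = (-cot θ cos φ(e^{-s sin θ}-1), cot θ sin φ(e^{s sin θ}-1), s sin θ) satisfies (x(t),y(t),z(t)) = (a,b,c). -/
/-! Since `arccot` takes values in `(0, π)`, both `sin φ` and `sin θ` are positive, so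
`t sin θ = c` and the curve reaches height `c`. There the `y`-coordinate is
`cot θ sin φ (e^c - 1)`, which equals `b` by the choice of `cot θ`; then, through
`cos φ = cot φ sin φ`, the `x`-coordinate equals `a` by the choice of `cot φ`. -/

open Real

/-- `arccot x = π/2 - arctan x`, the inverse cotangent with range `(0, π)`. -/
noncomputable def arccot (x : ℝ) : ℝ := Real.pi / 2 - Real.arctan x

lemma sin_arccot_pos (x : ℝ) : 0 < sin (arccot x) := by
  rw [arccot, sin_pi_div_two_sub, cos_arctan]
  positivity

lemma cot_arccot (x : ℝ) : cot (arccot x) = x := by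
  rw [cot_eq_cos_div_sin, arccot, cos_pi_div_two_sub, sin_pi_div_two_sub, sin_arctan, cos_arctan]
  have h : √(1 + x ^ 2) ≠ 0 := by positivity
  field_simp

lemma cos_arccot (x : ℝ) : cos (arccot x) = x * sin (arccot x) := by
  have h := cot_arccot x
  rw [cot_eq_cos_div_sin, div_eq_iff (sin_arccot_pos x).ne'] at h
  exact h

lemma exp_sub_one_ne_zero {x : ℝ} (hx : x ≠ 0) : exp x - 1 ≠ 0 := by
  simpa [sub_ne_zero, exp_eq_one_iff]

noncomputable def translationCurve (φ θ s : ℝ) : ℝ × ℝ × ℝ :=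
  (-cot θ * cos φ * (exp (-(s * sin θ)) - 1), cot θ * sin φ * (exp (s * sin θ) - 1), s * sin θ)

lemma translationCurve_div_sin (φ θ c : ℝ) (hθ : sin θ ≠ 0) :
    translationCurve φ θ (c / sin θ) =
      (-cot θ * cos φ * (exp (-c) - 1), cot θ * sin φ * (exp c - 1), c) := by
  rw [translationCurve, div_mul_cancel₀ c hθ]

/-- The parameters `(φ, θ, t)` of Lemma 3.2 (case `b ≠ 0`, `c ≠ 0`) carry the
translation curve from the origin to the point `(a,b,c)`. -/
theorem translation_curve_params (a b c : ℝ) (hb : b ≠ 0) (hc : c ≠ 0)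
    (φ θ t : ℝ)
    (hφ : φ = arccot (-(a / b) * ((Real.exp c - 1) / (Real.exp (-c) - 1))))
    (hθ : θ = arccot (b / (Real.sin φ * (Real.exp c - 1))))
    (ht : t = c / Real.sin θ) :
    (-Real.cot θ * Real.cos φ * (Real.exp (-(t * Real.sin θ)) - 1),
      Real.cot θ * Real.sin φ * (Real.exp (t * Real.sin θ) - 1),
      t * Real.sin θ) = (a, b, c) := by
  change translationCurve φ θ t = (a, b, c)
  have hsinφ : sin φ ≠ 0 := hφ ▸ (sin_arccot_pos _).ne'
  have hu := exp_sub_one_ne_zero hc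
  have hv := exp_sub_one_ne_zero (neg_ne_zero.mpr hc)
  have hcotθ : cot θ = b / (sin φ * (exp c - 1)) := hθ ▸ cot_arccot _
  have hcosφ : cos φ = -(a / b) * ((exp c - 1) / (exp (-c) - 1)) * sin φ := hφ ▸ cos_arccot _
  rw [ht, translationCurve_div_sin φ θ c (hθ ▸ (sin_arccot_pos _).ne'), hcotθ, hcosφ]
  congr 1
  · field_simp
  · congr 1
    field_simp
end

section
/- Let A₁ = (0,0,0), A₂ = (a,b,0), A₃ = (a₁,b₁,0) with ab₁ - a₁b ≠ 0. For every z ∈ ℝ, the point C(z) = ((bb₁(b-b₁)e^{-2z} + a²b₁ - a₁²b)/(2(ab₁-a₁b)), (-aa₁(a-a₁)e^{2z} + ab₁² - a₁b²)/(2(ab₁-a₁b)), z) lies on both translation-like bisector surfaces S_{A₁A₂} and S_{A₁A₃}, i.e. satisfies e^{2z}a(a-2x) + b(b-2y) = 0 and e^{2z}a₁(a₁-2x) + b₁(b₁-2y) = 0. -/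
/-! At each height `z` both bisector equations are linear in `(x, y)`:
`(e^{2z} a) x + b y = (e^{2z} a² + b²) / 2`, and likewise for `(a₁, b₁)`. Their determinant is
`e^{2z} (a b₁ - a₁ b) ≠ 0`, so the two lines meet in a single point, and Cramer's rule gives
`C(z)` once the factor `e^{2z}` is cancelled. -/

theorem cramer_two_by_two {K : Type*} [Field K] {p q r p₁ q₁ r₁ : K}
    (hdet : p * q₁ - p₁ * q ≠ 0) :
    let x := (r * q₁ - r₁ * q) / (p * q₁ - p₁ * q)
    let y := (p * r₁ - p₁ * r) / (p * q₁ - p₁ * q)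
    p * x + q * y = r ∧ p₁ * x + q₁ * y = r₁ := by
  constructor <;>
    (rw [mul_div_assoc', mul_div_assoc', ← add_div, div_eq_iff hdet]; ring)

/-- The parametric curve (3.9) lies on both bisector surfaces `S_{A₁A₂}` and `S_{A₁A₃}`
for `A₁ = (0,0,0)`, `A₂ = (a,b,0)`, `A₃ = (a₁,b₁,0)` with `ab₁ - a₁b ≠ 0`. -/
theorem sol_equidistant_locus_param (a b a₁ b₁ : ℝ) (h : a * b₁ - a₁ * b ≠ 0) :
    ∀ z : ℝ,
      (Real.exp (2 * z) * a * (a - 2 *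
          ((b * b₁ * (b - b₁) * Real.exp (-(2 * z)) + a ^ 2 * b₁ - a₁ ^ 2 * b) /
            (2 * (a * b₁ - a₁ * b)))) +
        b * (b - 2 *
          ((-(a * a₁ * (a - a₁)) * Real.exp (2 * z) + a * b₁ ^ 2 - a₁ * b ^ 2) /
            (2 * (a * b₁ - a₁ * b)))) = 0) ∧
      (Real.exp (2 * z) * a₁ * (a₁ - 2 *
          ((b * b₁ * (b - b₁) * Real.exp (-(2 * z)) + a ^ 2 * b₁ - a₁ ^ 2 * b) /
            (2 * (a * b₁ - a₁ * b)))) +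
        b₁ * (b₁ - 2 *
          ((-(a * a₁ * (a - a₁)) * Real.exp (2 * z) + a * b₁ ^ 2 - a₁ * b ^ 2) /
            (2 * (a * b₁ - a₁ * b)))) = 0) := by
  intro z
  set t := Real.exp (2 * z) with ht_def
  have ht : t ≠ 0 := Real.exp_ne_zero _
  have hdet : t * a * b₁ - t * a₁ * b ≠ 0 := by
    rw [mul_assoc, mul_assoc, ← mul_sub]; exact mul_ne_zero ht h
  obtain ⟨h₁, h₂⟩ := cramer_two_by_two (r := (t * a ^ 2 + b ^ 2) / 2)
    (r₁ := (t * a₁ ^ 2 + b₁ ^ 2) / 2) hdet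
  have hx : (b * b₁ * (b - b₁) * Real.exp (-(2 * z)) + a ^ 2 * b₁ - a₁ ^ 2 * b) /
      (2 * (a * b₁ - a₁ * b)) =
      ((t * a ^ 2 + b ^ 2) / 2 * b₁ - (t * a₁ ^ 2 + b₁ ^ 2) / 2 * b) /
        (t * a * b₁ - t * a₁ * b) := by
    rw [Real.exp_neg, ← ht_def]; field_simp; ring
  have hy : (-(a * a₁ * (a - a₁)) * t + a * b₁ ^ 2 - a₁ * b ^ 2) / (2 * (a * b₁ - a₁ * b)) =
      (t * a * ((t * a₁ ^ 2 + b₁ ^ 2) / 2) - t * a₁ * ((t * a ^ 2 + b ^ 2) / 2)) /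
        (t * a * b₁ - t * a₁ * b) := by
    field_simp; ring
  rw [hx, hy]
  constructor <;> linarith
end
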